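/- arXiv:1810.00065 — 7 statements merged into one kernel-verified Lean document; each statement's English description precedes it below -/
import Mathlib

section
/- If G is a cycle whose length is divisible by three, then the sum of (-1)^{|A|} over all stable (independent) sets A of G equals ±2 (i.e., has absolute value 2). -/
open Finset
open scoped Classical

variable {V : Type*} [Fintype V]

/-- `fG G X Y` is the sum of `(-1)^|A|` over stable sets `A` of `G`
with `X ⊆ A` and `A ∩ Y = ∅`. -/
noncomputable def fG (G : SimpleGraph V) (X Y : Finset V) : ℤ :=
  ∑ A ∈ Finset.univ.filter (fun A : Finset V =>
      (∀ u ∈ A, ∀ v ∈ A, ¬ G.Adj u v) ∧ X ⊆ A ∧ Disjoint A Y),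
    (-1 : ℤ) ^ A.card

/-!
Write `f(Y)` for the alternating sum over stable sets avoiding `Y`. Splitting according to
whether a vertex `v ∉ Y` lies in the stable set gives `f(Y) = f(Y ∪ {v}) - f(Y ∪ N[v])`.
On the cycle `C_N`, forbid an arc of `k ≥ 1` consecutive vertices and split at the vertex
right after it: the recursion lengthens the arc by one or by two, so the value is `ψ(N - k)`
with `ψ 0 = 1`, `ψ 1 = 0`, `ψ (j + 2) = ψ (j + 1) - ψ j` (the value on a path with `j`
vertices). Since `ψ (j + 3) = -ψ j`, splitting `C_N` at one vertex gives
`f(C_N) = ψ(N - 1) - ψ(N - 3)`, which for `N = 3m + 3` is `(-1)^m (ψ 2 - ψ 0) = -2 (-1)^m`.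
-/

open SimpleGraph

section StableSums

variable {G : SimpleGraph V}

lemma fG_eq_of_iso {W : Type*} [Fintype W] {H : SimpleGraph W} (e : G ≃g H) :
    fG G ∅ ∅ = fG H ∅ ∅ := by
  refine sum_equiv (Equiv.finsetCongr e.toEquiv) (fun A => ?_) (fun A _ => ?_)
  · simp only [mem_filter, mem_univ, true_and, empty_subset, disjoint_empty_right, and_true,
      Equiv.finsetCongr_apply, forall_mem_map, Equiv.coe_toEmbedding]
    exact forall₂_congr fun u _ => forall₂_congr fun v _ => not_congr e.map_adj_iff.symm
  · simp

lemma fG_empty_univ : fG G ∅ univ = 1 := by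
  rw [fG, sum_eq_single ∅] <;>
    simp [Finset.disjoint_left, ← eq_empty_iff_forall_notMem]

lemma fG_eq_add_insert (X Y : Finset V) (v : V) :
    fG G X Y = fG G X (insert v Y) + fG G (insert v X) Y := by
  simp only [fG, sum_filter, ← sum_add_distrib]
  refine sum_congr rfl fun A _ => ?_
  by_cases hv : v ∈ A <;> simp [insert_subset_iff, disjoint_insert_right, hv]

lemma fG_insert_eq_neg {X Y : Finset V} {v : V} (hvX : v ∉ X) (hvY : v ∉ Y) :
    fG G (insert v X) Y = -fG G X (insert v (Y ∪ G.neighborFinset v)) := by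
  rw [fG, fG, ← sum_neg_distrib]
  refine sum_nbij' (fun A => A.erase v) (insert v) (fun A hA => ?_) (fun B hB => ?_)
    (fun A hA => ?_) (fun B hB => ?_) (fun A hA => ?_)
  · simp only [mem_filter, mem_univ, true_and, insert_subset_iff] at hA
    obtain ⟨hA, ⟨hvA, hXA⟩, hAY⟩ := hA
    simp only [mem_filter, mem_univ, true_and, mem_erase, subset_erase, Finset.disjoint_left,
      mem_insert, mem_union, mem_neighborFinset]
    refine ⟨fun u hu w hw => hA u hu.2 w hw.2, ⟨hXA, hvX⟩, ?_⟩
    rintro u ⟨huv, hu⟩ (rfl | huY | hvu)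
    exacts [huv rfl, Finset.disjoint_left.mp hAY hu huY, hA v hvA u hu hvu]
  · simp only [mem_filter, mem_univ, true_and, disjoint_insert_right, disjoint_union_right] at hB
    obtain ⟨hB, hXB, hvB, hBY, hBN⟩ := hB
    simp only [mem_filter, mem_univ, true_and, insert_subset_iff, mem_insert_self,
      disjoint_insert_left, forall_mem_insert]
    refine ⟨⟨⟨G.irrefl, fun w hw hvw => ?_⟩, fun u hu => ⟨fun huv => ?_, hB u hu⟩⟩, ?_⟩
    · exact Finset.disjoint_left.mp hBN hw ((G.mem_neighborFinset v w).mpr hvw)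
    · exact Finset.disjoint_left.mp hBN hu ((G.mem_neighborFinset v u).mpr huv.symm)
    · exact ⟨hXB.trans (subset_insert v B), hvY, hBY⟩
  · exact insert_erase (insert_subset_iff.mp (mem_filter.mp hA).2.2.1).1
  · exact erase_insert (disjoint_insert_right.mp (mem_filter.mp hB).2.2.2).1
  · rw [← card_erase_add_one (insert_subset_iff.mp (mem_filter.mp hA).2.2.1).1,
      pow_succ, mul_neg_one]

lemma fG_eq_sub {X Y : Finset V} {v : V} (hvX : v ∉ X) (hvY : v ∉ Y) :
    fG G X Y = fG G X (insert v Y) - fG G X (insert v (Y ∪ G.neighborFinset v)) := by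
  rw [fG_eq_add_insert X Y v, fG_insert_eq_neg hvX hvY, sub_eq_add_neg]

end StableSums

open Fin.NatCast Fin.CommRing

section Arc

variable {n : ℕ} [NeZero n]

def arc (a : Fin n) (k : ℕ) : Finset (Fin n) :=
  (range k).image fun i : ℕ => a + i

lemma mem_arc {a x : Fin n} {k : ℕ} : x ∈ arc a k ↔ ∃ i < k, a + i = x := by
  simp [arc]

lemma arc_succ (a : Fin n) (k : ℕ) : arc a (k + 1) = insert (a + k) (arc a k) := by
  rw [arc, arc, range_add_one, image_insert]

lemma arc_eq_univ (a : Fin n) {k : ℕ} (hk : n ≤ k) : arc a k = univ :=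
  eq_univ_of_forall fun x => mem_arc.mpr
    ⟨(x - a).val, (x - a).isLt.trans_le hk, by rw [Fin.cast_val_eq_self, add_sub_cancel]⟩

lemma add_notMem_arc (a : Fin n) {k : ℕ} (hk : k < n) : a + k ∉ arc a k := by
  rw [mem_arc]
  rintro ⟨i, hi, hik⟩
  have := congrArg Fin.val (add_left_cancel hik)
  rw [Fin.val_cast_of_lt (hi.trans hk), Fin.val_cast_of_lt hk] at this
  omega

end Arc

def pathSeq : ℕ → ℤ
  | 0 => 1
  | 1 => 0
  | j + 2 => pathSeq (j + 1) - pathSeq j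

lemma pathSeq_add_three (j : ℕ) : pathSeq (j + 3) = -pathSeq j := by
  simp only [pathSeq]
  ring

lemma pathSeq_three_mul_add (m r : ℕ) : pathSeq (3 * m + r) = (-1) ^ m * pathSeq r := by
  induction m with
  | zero => simp
  | succ m ih =>
    rw [show 3 * (m + 1) + r = 3 * m + r + 3 by ring, pathSeq_add_three, ih, pow_succ]
    ring

section Cycle

variable {n : ℕ}

lemma fG_cycleGraph_arc_eq_sub (a : Fin (n + 3)) {k : ℕ} (hk : 1 ≤ k) (hkn : k < n + 3) :
    fG (cycleGraph (n + 3)) ∅ (arc a k) =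
      fG (cycleGraph (n + 3)) ∅ (arc a (k + 1)) - fG (cycleGraph (n + 3)) ∅ (arc a (k + 2)) := by
  have hprev : a + (k : Fin (n + 3)) - 1 ∈ arc a k := mem_arc.mpr
    ⟨k - 1, by omega, by rw [Nat.cast_sub hk, Nat.cast_one]; ring⟩
  rw [fG_eq_sub (notMem_empty _) (add_notMem_arc a hkn)]
  -- the predecessor `a + k - 1` is already forbidden, so `N[a + k]` extends the arc by two
  congr 2 <;> ext x
  · simp [arc_succ]
  · have hadj : (cycleGraph (n + 3)).Adj (a + k) x ↔ x = a + k - 1 ∨ x = a + k + 1 := by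
      rw [← mem_neighborSet, cycleGraph_neighborSet (n := n + 1)]; rfl
    simp only [arc_succ, mem_insert, mem_union, mem_neighborFinset, hadj, Nat.cast_succ,
      ← add_assoc]
    grind

lemma fG_cycleGraph_arc (a : Fin (n + 3)) :
    ∀ {j k : ℕ}, 1 ≤ k → k + j = n + 3 → fG (cycleGraph (n + 3)) ∅ (arc a k) = pathSeq j
  | 0, k, _, hkj => by rw [arc_eq_univ a (by omega), fG_empty_univ, pathSeq]
  | 1, k, hk, hkj => by
    rw [fG_cycleGraph_arc_eq_sub a hk (by omega), arc_eq_univ a (by omega),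
      arc_eq_univ a (by omega), fG_empty_univ, sub_self, pathSeq]
  | j + 2, k, hk, hkj => by
    rw [fG_cycleGraph_arc_eq_sub a hk (by omega), fG_cycleGraph_arc a (j := j + 1) (by omega)
      (by omega), fG_cycleGraph_arc a (j := j) (by omega) (by omega), pathSeq]

lemma fG_cycleGraph : fG (cycleGraph (n + 3)) ∅ ∅ = pathSeq (n + 2) - pathSeq n := by
  rw [fG_eq_sub (notMem_empty 1) (notMem_empty 1),
    ← fG_cycleGraph_arc (n := n) 1 (j := n + 2) (k := 1) le_rfl (by omega),
    ← fG_cycleGraph_arc (n := n) 0 (j := n) (k := 3) (by omega) (by omega)]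
  congr 2
  ext x
  have hadj : (cycleGraph (n + 3)).Adj 1 x ↔ x = 1 - 1 ∨ x = 1 + 1 := by
    rw [← mem_neighborSet, cycleGraph_neighborSet (n := n + 1)]; rfl
  simp only [arc_succ, mem_insert, mem_union, mem_neighborFinset, hadj]
  simp [arc, one_add_one_eq_two]
  tauto

lemma fG_cycleGraph_three_mul_add_three (m : ℕ) :
    fG (cycleGraph (3 * m + 3)) ∅ ∅ = -2 * (-1) ^ m := by
  rw [fG_cycleGraph, pathSeq_three_mul_add, show 3 * m = 3 * m + 0 from rfl, pathSeq_three_mul_add]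
  simp only [pathSeq]
  ring

end Cycle

theorem cycle_length_div_three (G : SimpleGraph V) (n : ℕ) (hn : 3 ≤ n) (h3 : 3 ∣ n)
    (iso : G ≃g SimpleGraph.cycleGraph n) :
    |fG G ∅ ∅| = 2 := by
  obtain ⟨m, rfl⟩ : ∃ m, n = 3 * m + 3 := ⟨n / 3 - 1, by omega⟩
  rw [fG_eq_of_iso iso, fG_cycleGraph_three_mul_add_three]
  simp [abs_mul]
end

section
/- Let G be a graph, and let X, Y ⊆ V(G) be disjoint with f_G(X,Y) ≠ 0. If v ∈ V(G) ∖ (N[X] ∪ Y), then v has a neighbour in V(G) ∖ (N[X] ∪ Y). -/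
open Finset
open scoped Classical

variable {V : Type*} [Fintype V]

/-!
Toggling `v` is a sign-reversing involution on the stable sets `A` with `X ⊆ A` and
`A ∩ Y = ∅`: `v` lies outside `N[X] ∪ Y`, and if all its neighbours lay in `N[X] ∪ Y` then none
of them could belong to such an `A`, so `f_G(X, Y)` would vanish.
-/

theorem Finset.sum_filter_neg_one_pow_card_eq_zero {α R : Type*} [Fintype α] [DecidableEq α]
    [Ring R] (P : Finset α → Prop) [DecidablePred P] (a : α)
    (hP : ∀ s, P (insert a s) ↔ P s) :
    ∑ s ∈ univ.filter P, (-1 : R) ^ #s = 0 := by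
  have hP_erase (s : Finset α) : P (s.erase a) ↔ P s := by
    by_cases ha : a ∈ s
    · rw [← hP, insert_erase ha]
    · rw [erase_eq_of_notMem ha]
  refine sum_involution (fun s _ => if a ∈ s then s.erase a else insert a s) (fun s _ => ?_)
    (fun s _ _ => ?_) (fun s hs => ?_) (fun s _ => ?_)
  · split_ifs with ha
    · rw [← card_erase_add_one ha, pow_succ]; noncomm_ring
    · rw [card_insert_of_notMem ha, pow_succ]; noncomm_ring
  · split_ifs with ha
    · exact ne_of_mem_of_not_mem' ha (notMem_erase a s) |>.symm
    · exact ne_of_mem_of_not_mem' (mem_insert_self a s) ha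
  · rw [mem_filter_univ] at hs ⊢
    split_ifs
    · exact (hP_erase s).2 hs
    · exact (hP s).2 hs
  · by_cases ha : a ∈ s <;> simp [ha]

section

variable {α : Type*} (G : SimpleGraph α)

def IsAdmissibleStableSet (X Y A : Finset α) : Prop :=
  (∀ u ∈ A, ∀ v ∈ A, ¬ G.Adj u v) ∧ X ⊆ A ∧ Disjoint A Y

theorem isAdmissibleStableSet_insert_iff [DecidableEq α] {X Y : Finset α} {v : α}
    (hvX : v ∉ X) (hvNX : ∀ u ∈ X, ¬ G.Adj u v) (hvY : v ∉ Y)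
    (hlonely : ∀ w, G.Adj v w → w ∉ X → (∀ u ∈ X, ¬ G.Adj u w) → w ∈ Y) (A : Finset α) :
    IsAdmissibleStableSet G X Y (insert v A) ↔ IsAdmissibleStableSet G X Y A := by
  constructor
  · rintro ⟨hstable, hXA, hAY⟩
    refine ⟨fun u hu w hw => hstable u (mem_insert_of_mem hu) w (mem_insert_of_mem hw),
      fun x hx => (mem_insert.1 (hXA hx)).resolve_left (ne_of_mem_of_not_mem hx hvX), ?_⟩
    exact hAY.mono_left (subset_insert v A)
  · rintro ⟨hstable, hXA, hAY⟩
    have hv_nonadj : ∀ w ∈ A, ¬ G.Adj v w := fun w hw hvw =>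
      disjoint_left.1 hAY hw <| hlonely w hvw
        (fun hwX => hvNX w hwX hvw.symm) (fun u hu => hstable u (hXA hu) w hw)
    refine ⟨?_, hXA.trans (subset_insert v A), disjoint_insert_left.2 ⟨hvY, hAY⟩⟩
    simp only [mem_insert, forall_eq_or_imp, G.irrefl, not_false_eq_true, true_and]
    exact ⟨hv_nonadj, fun u hu => ⟨fun huv => hv_nonadj u hu huv.symm, hstable u hu⟩⟩

end

theorem fG_eq_sum_filter_isAdmissibleStableSet (G : SimpleGraph V) (X Y : Finset V) :
    fG G X Y = ∑ A ∈ univ.filter (IsAdmissibleStableSet G X Y), (-1 : ℤ) ^ #A := by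
  unfold fG IsAdmissibleStableSet
  congr

theorem lonely_general (G : SimpleGraph V) (X Y : Finset V)
    (hne : fG G X Y ≠ 0) (v : V)
    (hv : v ∉ X ∧ (∀ u ∈ X, ¬ G.Adj u v) ∧ v ∉ Y) :
    ∃ w : V, G.Adj v w ∧ w ∉ X ∧ (∀ u ∈ X, ¬ G.Adj u w) ∧ w ∉ Y := by
  obtain ⟨hvX, hvNX, hvY⟩ := hv
  by_contra! hlonely
  apply hne
  rw [fG_eq_sum_filter_isAdmissibleStableSet]
  exact sum_filter_neg_one_pow_card_eq_zero (IsAdmissibleStableSet G X Y) v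
    (isAdmissibleStableSet_insert_iff G hvX hvNX hvY hlonely)

theorem lonely (G : SimpleGraph V) (X Y : Finset V) (hXY : Disjoint X Y)
    (hne : fG G X Y ≠ 0) (v : V)
    (hv : v ∉ X ∧ (∀ u ∈ X, ¬ G.Adj u v) ∧ v ∉ Y) :
    ∃ w : V, G.Adj v w ∧ w ∉ X ∧ (∀ u ∈ X, ¬ G.Adj u w) ∧ w ∉ Y :=
  lonely_general G X Y hne v hv
end

section
/- Let g be a good counter on a graph G, let X, Y ⊆ V(G) be disjoint, and let v ∈ V(G) ∖ (X ∪ Y). Then |g(X,Y) − g(X∪{v}, Y)| ≤ 1 and |g(X,Y) − g(X, Y∪{v})| ≤ 1. -/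
open Finset
open scoped Classical

variable {V : Type*} [Fintype V]

/-- `g` is a counter on `G` if `g = fG G` or `g = - fG G`. -/
def IsCounter (G : SimpleGraph V) (g : Finset V → Finset V → ℤ) : Prop :=
  (g = fun X Y => fG G X Y) ∨ (g = fun X Y => - fG G X Y)

/-- A counter is good if it satisfies the two boundedness conditions. -/
def IsGood (g : Finset V → Finset V → ℤ) : Prop :=
  ∀ X Y : Finset V, Disjoint X Y → (X ∪ Y).Nonempty →
    |g X Y| ≤ 1 ∧
    ∀ u v : V, u ∉ X ∪ Y → v ∉ X ∪ Y →
      |g (insert u X) Y - g (insert v X) Y| ≤ 1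

lemma fG_eq_fG_insert_add_fG_insert (G : SimpleGraph V) (X Y : Finset V) (v : V) :
    fG G X Y = fG G (insert v X) Y + fG G X (insert v Y) := by
  unfold fG
  rw [← sum_filter_add_sum_filter_not _ (fun A => v ∈ A)]
  congr 1 <;> refine sum_congr ?_ fun _ _ => rfl <;> ext A
  · simp only [mem_filter, mem_univ, true_and, insert_subset_iff]
    tauto
  · simp only [mem_filter, mem_univ, true_and, disjoint_insert_right]
    tauto

lemma IsCounter.eq_add {G : SimpleGraph V} {g : Finset V → Finset V → ℤ}
    (hc : IsCounter G g) (X Y : Finset V) (v : V) :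
    g X Y = g (insert v X) Y + g X (insert v Y) := by
  rcases hc with rfl | rfl
  · exact fG_eq_fG_insert_add_fG_insert G X Y v
  · simp only [fG_eq_fG_insert_add_fG_insert G X Y v, neg_add]

theorem adjacent_bound (G : SimpleGraph V) (g : Finset V → Finset V → ℤ)
    (hc : IsCounter G g) (hg : IsGood g)
    (X Y : Finset V) (hXY : Disjoint X Y) (v : V) (hv : v ∉ X ∪ Y) :
    |g X Y - g (insert v X) Y| ≤ 1 ∧ |g X Y - g X (insert v Y)| ≤ 1 := by
  obtain ⟨hvX, hvY⟩ : v ∉ X ∧ v ∉ Y := by simpa only [mem_union, not_or] using hv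
  have hsplit := hc.eq_add X Y v
  have hX : |g (insert v X) Y| ≤ 1 :=
    (hg _ _ (disjoint_insert_left.2 ⟨hvY, hXY⟩) ⟨v, by simp⟩).1
  have hY : |g X (insert v Y)| ≤ 1 :=
    (hg _ _ (disjoint_insert_right.2 ⟨hvX, hXY⟩) ⟨v, by simp⟩).1
  constructor
  · rwa [hsplit, add_sub_cancel_left]
  · rwa [hsplit, add_sub_cancel_right]
end

section
/- Let g be a good counter on a graph G, let X, Y ⊆ V(G) be disjoint, and let u, v ∈ V(G) ∖ (X ∪ Y). If g(X,Y) = g(X∪{u,v}, Y) ≠ 0, then g(X,Y) = g(X∪{v}, Y). -/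
open Finset
open scoped Classical

variable {V : Type*} [Fintype V]

/-! Replacing `g` by `-g` we may assume `g(X,Y) = 1`, and we induct on the number of vertices
outside `X ∪ Y`. Splitting on a vertex, `g(X,Y) = g(X+w,Y) + g(X,Y+w)`, together with `|g| ≤ 1`
forces a counterexample to have `g(X+v,Y) = 0`, `g(X+v,Y+u) = -1`, `g(X,Y+v) = 1` and
`g(X+u,Y+v) = 0`. If every neighbour of `v` lies in `Y`, toggling `v` is a sign-reversing
involution on the stable sets counted by `g(X,Y)`, so `g(X,Y) = 0`. Otherwise `v` has a neighbour
`w` outside `X ∪ Y`; the induction hypothesis for `(X, Y+v)` with the pair `(w,u)` and for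
`(X, Y+w)` with the pair `(u,v)`, fed through the same splitting identities, gives
`g(X+v,Y+u) - g(X+w,Y+u) = -2`, contradicting goodness. -/

section fG

variable (G : SimpleGraph V)

lemma fG_eq_add (X Y : Finset V) (a : V) :
    fG G X Y = fG G (insert a X) Y + fG G X (insert a Y) := by
  unfold fG
  rw [← sum_filter_add_sum_filter_not _ (fun A => a ∈ A), filter_filter, filter_filter]
  congr 2 <;> ext A <;>
    simp only [mem_filter, mem_univ, true_and, insert_subset_iff, disjoint_insert_right] <;> tauto

variable {G}

lemma fG_eq_zero_of_adj {X Y : Finset V} {a b : V} (ha : a ∈ X) (hb : b ∈ X)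
    (hab : G.Adj a b) : fG G X Y = 0 := by
  refine sum_eq_zero fun A hA => ?_
  simp only [mem_filter, mem_univ, true_and] at hA
  exact absurd hab (hA.1 a (hA.2.1 ha) b (hA.2.1 hb))

lemma fG_eq_zero_of_forall_adj_mem {X Y : Finset V} {v : V} (hvX : v ∉ X) (hvY : v ∉ Y)
    (hN : ∀ w, G.Adj v w → w ∈ Y) : fG G X Y = 0 := by
  refine sum_involution (fun A _ => if v ∈ A then A.erase v else insert v A) ?_ ?_ ?_ ?_
  · intro A _
    split_ifs with hv
    · rw [← card_erase_add_one hv, pow_succ]; ring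
    · rw [card_insert_of_notMem hv, pow_succ]; ring
  · intro A _ _
    split_ifs with hv
    · exact (ne_of_mem_of_not_mem' hv (notMem_erase v A)).symm
    · exact ne_of_mem_of_not_mem' (mem_insert_self v A) hv
  · intro A hA
    simp only [mem_filter, mem_univ, true_and] at hA ⊢
    obtain ⟨hstable, hXA, hAY⟩ := hA
    split_ifs with hv
    · refine ⟨fun a ha b hb => hstable a (mem_of_mem_erase ha) b (mem_of_mem_erase hb),
        fun x hx => mem_erase.2 ⟨ne_of_mem_of_not_mem hx hvX, hXA hx⟩,
        disjoint_of_subset_left (erase_subset v A) hAY⟩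
    · refine ⟨?_, hXA.trans (subset_insert v A), disjoint_insert_left.2 ⟨hvY, hAY⟩⟩
      have hN' : ∀ b ∈ A, ¬ G.Adj v b := fun b hb hvb => disjoint_left.1 hAY hb (hN b hvb)
      simp only [mem_insert, forall_eq_or_imp]
      exact ⟨⟨G.loopless.irrefl v, hN'⟩, fun a ha =>
        ⟨fun hav => hN' a ha hav.symm, hstable a ha⟩⟩
  · intro A _
    split_ifs with hv hv' hv'
    · exact absurd hv' (notMem_erase v A)
    · exact insert_erase hv
    · exact erase_insert hv
    · exact absurd (mem_insert_self v A) hv'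

end fG

omit [Fintype V] in
lemma IsGood.neg {g : Finset V → Finset V → ℤ} (hg : IsGood g) : IsGood fun X Y => -g X Y :=
  fun X Y hXY h => ⟨by simpa using (hg X Y hXY h).1,
    fun p q hp hq => by simpa only [neg_sub_neg] using (hg X Y hXY h).2 q p hq hp⟩

lemma card_sdiff_union_insert_lt {X Y : Finset V} {a : V} (ha : a ∉ X ∪ Y) :
    #(univ \ (X ∪ insert a Y)) < #(univ \ (X ∪ Y)) := by
  rw [union_insert, sdiff_insert]
  exact card_erase_lt_of_mem (by simpa using ha)

namespace IsCounter

variable {G : SimpleGraph V} {g : Finset V → Finset V → ℤ}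

lemma neg (hc : IsCounter G g) : IsCounter G fun X Y => -g X Y := by
  rcases hc with rfl | rfl
  · exact Or.inr rfl
  · exact Or.inl (by simp)

lemma eq_add_s8 (hc : IsCounter G g) (X Y : Finset V) (a : V) :
    g X Y = g (insert a X) Y + g X (insert a Y) := by
  rcases hc with rfl | rfl <;> simp only [fG_eq_add G X Y a]
  ring

lemma eq_zero_of_adj (hc : IsCounter G g) {X Y : Finset V} {a b : V} (ha : a ∈ X) (hb : b ∈ X)
    (hab : G.Adj a b) : g X Y = 0 := by
  rcases hc with rfl | rfl <;> simp [fG_eq_zero_of_adj ha hb hab]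

lemma eq_zero_of_forall_adj_mem (hc : IsCounter G g) {X Y : Finset V} {v : V} (hvX : v ∉ X)
    (hvY : v ∉ Y) (hN : ∀ w, G.Adj v w → w ∈ Y) : g X Y = 0 := by
  rcases hc with rfl | rfl <;> simp [fG_eq_zero_of_forall_adj_mem hvX hvY hN]

lemma eq_zero_of_mem_of_mem (hc : IsCounter G g) {X Y : Finset V} {a : V} (haX : a ∈ X)
    (haY : a ∈ Y) : g X Y = 0 := by
  have := hc.eq_add_s8 X Y a
  rw [insert_eq_of_mem haX, insert_eq_of_mem haY] at this
  omega

lemma abs_le_one (hc : IsCounter G g) (hg : IsGood g) {X Y : Finset V}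
    (h : (X ∪ Y).Nonempty) : |g X Y| ≤ 1 := by
  by_cases hXY : Disjoint X Y
  · exact (hg X Y hXY h).1
  · obtain ⟨a, haX, haY⟩ := not_disjoint_iff.1 hXY
    simp [hc.eq_zero_of_mem_of_mem haX haY]

lemma abs_sub_le_one (hc : IsCounter G g) (hg : IsGood g) {X Y : Finset V} {p q : V}
    (h : (X ∪ Y).Nonempty) (hp : p ∉ X ∪ Y) (hq : q ∉ X ∪ Y) :
    |g (insert p X) Y - g (insert q X) Y| ≤ 1 := by
  by_cases hXY : Disjoint X Y
  · exact (hg X Y hXY h).2 p q hp hq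
  · obtain ⟨a, haX, haY⟩ := not_disjoint_iff.1 hXY
    simp [hc.eq_zero_of_mem_of_mem (mem_insert_of_mem haX) haY]

lemma values_of_insert_ne_one (hc : IsCounter G g) (hg : IsGood g) {X Y : Finset V} {u v : V}
    (hX : g X Y = 1) (hd : g (insert u (insert v X)) Y = 1) (hb : g (insert v X) Y ≠ 1) :
    g (insert v X) Y = 0 ∧ g (insert v X) (insert u Y) = -1 ∧ g X (insert v Y) = 1 ∧
      g (insert u X) (insert v Y) = 0 := by
  have h₁ := hc.eq_add_s8 X Y v
  have h₂ := hc.eq_add_s8 (insert v X) Y u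
  have h₃ := hc.eq_add_s8 (insert u X) Y v
  have h₄ := hc.eq_add_s8 X (insert v Y) u
  rw [insert_comm v u] at h₃
  have b₁ := abs_le.1 (hc.abs_le_one hg (X := insert v X) (Y := Y) ⟨v, by simp⟩)
  have b₂ := abs_le.1 (hc.abs_le_one hg (X := insert u X) (Y := Y) ⟨u, by simp⟩)
  have b₃ := abs_le.1 (hc.abs_le_one hg (X := insert v X) (Y := insert u Y) ⟨v, by simp⟩)
  have b₄ := abs_le.1 (hc.abs_le_one hg (X := X) (Y := insert u (insert v Y)) ⟨u, by simp⟩)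
  omega

lemma insert_eq_one_of_adj (hc : IsCounter G g) (hg : IsGood g) {X Y : Finset V} {u v w : V}
    (hv : v ∉ X ∪ Y) (hw : w ∉ X ∪ Y) (huv : u ≠ v) (hwu : w ≠ u) (hvw : G.Adj v w)
    (hX : g X Y = 1) (hd : g (insert u (insert v X)) Y = 1)
    (ih_v : g X (insert v Y) = 1 → g (insert w (insert u X)) (insert v Y) = 1 →
      g (insert u X) (insert v Y) = 1)
    (ih_w : g X (insert w Y) = 1 → g (insert u (insert v X)) (insert w Y) = 1 →
      g (insert v X) (insert w Y) = 1) :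
    g (insert v X) Y = 1 := by
  by_contra hb
  obtain ⟨hb₀, hq, hsv, hp⟩ := hc.values_of_insert_ne_one hg hX hd hb
  have hxu : g (insert w (insert u X)) Y = 0 := by
    have hsplit := hc.eq_add_s8 (insert w (insert u X)) Y v
    have z := hc.eq_zero_of_adj (X := insert v (insert w (insert u X))) (Y := Y)
      (mem_insert_self _ _) (by simp) hvw
    have hxp : g (insert w (insert u X)) (insert v Y) ≠ 1 := fun h => by
      simpa [hp] using ih_v hsv h
    have s := abs_le.1 (hc.abs_sub_le_one hg (X := insert u X) (Y := Y) (p := v) (q := w)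
      ⟨u, by simp⟩ (by simpa [huv.symm] using hv) (by simpa [hwu] using hw))
    rw [insert_comm v u] at s
    have b := abs_le.1 (hc.abs_le_one hg (X := insert w (insert u X)) (Y := Y) ⟨w, by simp⟩)
    omega
  have hy : g X (insert w Y) = 0 := by
    have h₁ := hc.eq_add_s8 (insert v X) Y w
    have h₂ := hc.eq_add_s8 (insert u (insert v X)) Y w
    have h₃ := hc.eq_add_s8 X Y w
    have z₁ := hc.eq_zero_of_adj (X := insert w (insert v X)) (Y := Y) (by simp)
      (mem_insert_self _ _) hvw
    have z₂ := hc.eq_zero_of_adj (X := insert w (insert u (insert v X))) (Y := Y) (by simp)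
      (mem_insert_self _ _) hvw
    have hy₁ : g X (insert w Y) ≠ 1 := fun h => by
      have := ih_w h (by omega)
      omega
    have b₁ := abs_le.1 (hc.abs_le_one hg (X := insert w X) (Y := Y) ⟨w, by simp⟩)
    have b₂ := abs_le.1 (hc.abs_le_one hg (X := X) (Y := insert w Y) ⟨w, by simp⟩)
    omega
  have h₁ := hc.eq_add_s8 (insert w X) Y u
  have h₂ := hc.eq_add_s8 X Y w
  rw [insert_comm u w] at h₁
  have s := abs_le.1 (hc.abs_sub_le_one hg (X := X) (Y := insert u Y) (p := v) (q := w)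
    ⟨u, by simp⟩ (by simpa [huv.symm] using hv) (by simpa [hwu] using hw))
  omega

theorem insert_eq_one (hc : IsCounter G g) (hg : IsGood g) {X Y : Finset V} {u v : V}
    (hu : u ∉ X ∪ Y) (hv : v ∉ X ∪ Y) (hX : g X Y = 1)
    (hd : g (insert u (insert v X)) Y = 1) : g (insert v X) Y = 1 := by
  obtain rfl | huv := eq_or_ne u v
  · rwa [insert_idem] at hd
  have hd₀ : g (insert u (insert v X)) Y ≠ 0 := by omega
  obtain ⟨w, hvw, hwY⟩ : ∃ w, G.Adj v w ∧ w ∉ Y := by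
    by_contra! hN
    rw [mem_union, not_or] at hv
    have := hc.eq_zero_of_forall_adj_mem hv.1 hv.2 hN
    omega
  have hwX : w ∉ X := fun hwX => hd₀ (hc.eq_zero_of_adj (by simp) (by simp [hwX]) hvw)
  have hwu : w ≠ u := by
    rintro rfl
    exact hd₀ (hc.eq_zero_of_adj (by simp) (by simp) hvw)
  have hw : w ∉ X ∪ Y := by simp [hwX, hwY]
  have hwv : w ≠ v := (G.ne_of_adj hvw).symm
  exact hc.insert_eq_one_of_adj hg hv hw huv hwu hvw hX hd
    (hc.insert_eq_one hg (by simpa [hwv] using hw) (by simpa [huv] using hu))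
    (hc.insert_eq_one hg (by simpa [hwu.symm] using hu) (by simpa [hwv.symm] using hv))
termination_by #(univ \ (X ∪ Y))
decreasing_by
  · exact card_sdiff_union_insert_lt hv
  · exact card_sdiff_union_insert_lt hw

end IsCounter

theorem sophieconf_general (G : SimpleGraph V) (g : Finset V → Finset V → ℤ)
    (hc : IsCounter G g) (hg : IsGood g)
    (X Y : Finset V) (u v : V)
    (hu : u ∉ X ∪ Y) (hv : v ∉ X ∪ Y)
    (h1 : g X Y = g (insert u (insert v X)) Y) (h2 : g X Y ≠ 0) :
    g X Y = g (insert v X) Y := by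
  wlog hX : g X Y = 1 generalizing g with H
  · have hX' : g X Y = -1 := by
      have := abs_le.1 (hc.abs_le_one hg (X := insert u (insert v X)) (Y := Y) ⟨u, by simp⟩)
      omega
    simpa using H (fun X Y => -g X Y) hc.neg hg.neg (by simpa using h1) (by simpa using h2)
      (by simp [hX'])
  exact hX.trans (hc.insert_eq_one hg hu hv hX (h1.symm.trans hX)).symm

theorem sophieconf (G : SimpleGraph V) (g : Finset V → Finset V → ℤ)
    (hc : IsCounter G g) (hg : IsGood g)
    (X Y : Finset V) (hXY : Disjoint X Y) (u v : V)
    (hu : u ∉ X ∪ Y) (hv : v ∉ X ∪ Y)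
    (h1 : g X Y = g (insert u (insert v X)) Y) (h2 : g X Y ≠ 0) :
    g X Y = g (insert v X) Y :=
  sophieconf_general G g hc hg X Y u v hu hv h1 h2
end

section
/- Let G be a nonnull graph whose vertex set is partitioned into three stable sets A1, A2, A3, such that for i = 1,2,3 every vertex in A_i has a neighbour in A_{i+1} (indices mod 3). Then G has an induced cycle of length divisible by three. -/
/-!
Orient every edge of `G` from colour `i` to colour `i + 1`: since the colour classes are stable,
each edge gets exactly one direction, and every vertex has an out-neighbour. Hence there is a
closed directed walk; take a shortest one. Its colours rise by one at each step, so its length is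
divisible by three. A chord would be oriented one way or the other, and either way it would close
off a shorter directed walk, so the shortest walk is an induced cycle of `G`.
-/

open Function SimpleGraph

section

variable {V : Type*}

/-- A closed `R`-walk of length `n`, traversed forever. -/
structure IsPeriodicChain (R : V → V → Prop) (n : ℕ) (w : ℕ → V) : Prop where
  periodic : Periodic w n
  rel : ∀ k, R (w k) (w (k + 1))

structure IsShortestPeriodicChain (R : V → V → Prop) (n : ℕ) (w : ℕ → V) : Prop where
  pos : 0 < n
  chain : IsPeriodicChain R n w
  le : ∀ m u, 0 < m → IsPeriodicChain R m u → n ≤ m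

variable {R : V → V → Prop} {n : ℕ} {w : ℕ → V}

theorem exists_isPeriodicChain_of_rel (hw : ∀ k, R (w k) (w (k + 1))) {j m : ℕ}
    (h : R (w (j + m)) (w j)) : ∃ u, IsPeriodicChain R (m + 1) u := by
  refine ⟨fun k => w (j + k % (m + 1)), ⟨fun k => by simp only [Nat.add_mod_right], fun k => ?_⟩⟩
  rw [← Nat.mod_add_mod k (m + 1) 1]
  have hk : k % (m + 1) < m + 1 := Nat.mod_lt _ (by omega)
  rcases Nat.lt_or_ge (k % (m + 1)) m with hlt | hge
  · rw [Nat.mod_eq_of_lt (by omega : k % (m + 1) + 1 < m + 1)]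
    exact hw _
  · rw [show k % (m + 1) = m by omega, Nat.mod_self, Nat.add_zero]
    exact h

theorem exists_isPeriodicChain [Finite V] [Nonempty V] (h : ∀ x, ∃ y, R x y) :
    ∃ n, 0 < n ∧ ∃ w, IsPeriodicChain R n w := by
  choose f hf using h
  set v := Classical.arbitrary V
  obtain ⟨a, b, hne, heq⟩ := Finite.exists_ne_map_eq_of_infinite fun k => f^[k] v
  wlog hab : a < b generalizing a b
  · exact this b a hne.symm heq.symm (by omega)
  have hw (k : ℕ) : R (f^[k] v) (f^[k + 1] v) := by
    rw [iterate_succ_apply']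
    exact hf _
  have hclose := hw (a + (b - a - 1))
  rw [show a + (b - a - 1) + 1 = b by omega, ← heq] at hclose
  obtain ⟨u, hu⟩ := exists_isPeriodicChain_of_rel (w := fun k => f^[k] v) hw hclose
  exact ⟨_, Nat.succ_pos _, u, hu⟩

theorem exists_isShortestPeriodicChain [Finite V] [Nonempty V] (h : ∀ x, ∃ y, R x y) :
    ∃ n w, IsShortestPeriodicChain R n w := by
  classical
  have hex := exists_isPeriodicChain h
  obtain ⟨hpos, w, hw⟩ := Nat.find_spec hex
  exact ⟨_, w, ⟨hpos, hw, fun m u hm hu => Nat.find_min' hex ⟨hm, u, hu⟩⟩⟩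

theorem IsPeriodicChain.dvd_of_rel_imp_eq_add_one {k : ℕ} {C : V → ZMod k}
    (hC : ∀ u v, R u v → C v = C u + 1) (hw : IsPeriodicChain R n w) : k ∣ n := by
  have hcolour (i : ℕ) : C (w i) = C (w 0) + i := by
    induction i with
    | zero => simp
    | succ i ih => rw [hC _ _ (hw.rel i), ih, Nat.cast_succ, add_assoc]
  have hn := hcolour n
  rw [hw.periodic.eq, left_eq_add] at hn
  exact (ZMod.natCast_eq_zero_iff n k).mp hn

namespace IsShortestPeriodicChain

variable (hw : IsShortestPeriodicChain R n w)
include hw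

theorem le_of_rel {j m : ℕ} (h : R (w (j + m)) (w j)) : n ≤ m + 1 := by
  obtain ⟨u, hu⟩ := exists_isPeriodicChain_of_rel hw.chain.rel h
  exact hw.le _ u m.succ_pos hu

theorem injOn : Set.InjOn w (Set.Iio n) := by
  intro i hi j hj hij
  by_contra hne
  wlog hlt : i < j generalizing i j
  · exact this hj hi hij.symm (Ne.symm hne) (by omega)
  have hstep := hw.chain.rel (i + (j - 1 - i))
  rw [show i + (j - 1 - i) + 1 = j by omega, ← hij] at hstep
  have := hw.le_of_rel hstep
  simp only [Set.mem_Iio] at hj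
  omega

theorem rel_iff {i j : ℕ} (hi : i < n) (hj : j < n) :
    R (w i) (w j) ↔ j = i + 1 ∨ (i + 1 = n ∧ j = 0) := by
  constructor
  · intro h
    rcases lt_or_ge i j with hij | hji
    · have := hw.le_of_rel (j := j) (m := i + n - j)
        (by rwa [show j + (i + n - j) = i + n by omega, hw.chain.periodic i])
      omega
    · have := hw.le_of_rel (j := j) (m := i - j) (by rwa [show j + (i - j) = i by omega])
      omega
  · rintro (rfl | ⟨hin, rfl⟩)
    · exact hw.chain.rel i
    · have := hw.chain.rel i
      rwa [hin, hw.chain.periodic.eq] at this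

/-- For an orientation `R` of `G`, a shortest closed `R`-walk is an induced cycle of `G`. -/
def toCycleGraphEmbedding {G : SimpleGraph V} (hR : ∀ u v, G.Adj u v ↔ R u v ∨ R v u) :
    cycleGraph n ↪g G where
  toFun i := w i
  inj' i j h := Fin.ext (by exact hw.injOn i.isLt j.isLt h)
  map_rel_iff' {i j} := by
    change G.Adj (w i) (w j) ↔ _
    rcases eq_or_ne i j with rfl | hne
    · simp only [G.irrefl, false_iff, cycleGraph_adj', Fin.sub_val_of_le le_rfl]
      omega
    rw [hR, hw.rel_iff i.isLt j.isLt, hw.rel_iff j.isLt i.isLt, cycleGraph_adj']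
    rcases hne.lt_or_gt with h | h
    · rw [Fin.sub_val_of_le h.le, Fin.coe_sub_iff_lt.mpr h]
      omega
    · rw [Fin.sub_val_of_le h.le, Fin.coe_sub_iff_lt.mpr h]
      omega

end IsShortestPeriodicChain

namespace SimpleGraph.Coloring

variable {G : SimpleGraph V}

theorem adj_iff_eq_add_one (C : G.Coloring (ZMod 3)) (u v : V) :
    G.Adj u v ↔ (G.Adj u v ∧ C v = C u + 1) ∨ (G.Adj v u ∧ C u = C v + 1) := by
  have hne : ∀ x y : ZMod 3, x ≠ y → y = x + 1 ∨ x = y + 1 := by decide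
  refine ⟨fun h => (hne _ _ (C.valid h)).imp (⟨h, ·⟩) (⟨h.symm, ·⟩), ?_⟩
  rintro (⟨h, -⟩ | ⟨h, -⟩)
  exacts [h, h.symm]

theorem exists_cycleGraph_embedding_three_dvd [Finite V] [Nonempty V] (C : G.Coloring (ZMod 3))
    (h : ∀ v, ∃ u, G.Adj v u ∧ C u = C v + 1) :
    ∃ n, 0 < n ∧ 3 ∣ n ∧ Nonempty (cycleGraph n ↪g G) := by
  obtain ⟨n, w, hw⟩ :=
    exists_isShortestPeriodicChain (R := fun u v => G.Adj u v ∧ C v = C u + 1) h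
  exact ⟨n, hw.pos, hw.chain.dvd_of_rel_imp_eq_add_one fun _ _ h => h.2,
    ⟨hw.toCycleGraphEmbedding C.adj_iff_eq_add_one⟩⟩

end SimpleGraph.Coloring

end

theorem three_coloured_not_ternary {V : Type*} [Fintype V] (G : SimpleGraph V)
    (hV : Nonempty V) (A : Fin 3 → Set V)
    (hpart : ∀ v : V, ∃! i : Fin 3, v ∈ A i)
    (hstable : ∀ i : Fin 3, ∀ u ∈ A i, ∀ v ∈ A i, ¬ G.Adj u v)
    (hnbr : ∀ i : Fin 3, ∀ u ∈ A i, ∃ v ∈ A (i + 1), G.Adj u v) :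
    ∃ n : ℕ, 3 ≤ n ∧ 3 ∣ n ∧ Nonempty (SimpleGraph.cycleGraph n ↪g G) := by
  choose colour hcolour hunique using hpart
  let C : G.Coloring (ZMod 3) := Coloring.mk colour fun {u v} huv heq =>
    hstable (colour u) u (hcolour u) v (heq ▸ hcolour v) huv
  have hup (v : V) : ∃ u, G.Adj v u ∧ C u = C v + 1 :=
    let ⟨u, hu, hvu⟩ := hnbr (colour v) v (hcolour v)
    ⟨u, hvu, (hunique u _ hu).symm⟩
  obtain ⟨n, hn, hdvd, hembed⟩ := C.exists_cycleGraph_embedding_three_dvd hup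
  exact ⟨n, Nat.le_of_dvd hn hdvd, hdvd, hembed⟩
end

section
/- Let V be a finite set and let H be a family of k-element subsets of V such that every (k+1)-element subset of V that includes a member of H includes at least two members of H. Then the relation on V defined by 'u ~ v iff u = v, or (no member of H contains both u and v, and for each C ⊆ V∖{u,v}, C∪{u} ∈ H iff C∪{v} ∈ H)' is an equivalence relation, and for all distinct u, v ∈ V, exactly one of the following holds: u ~ v, or some member of H contains both u and v. -/
/-!
`Twins` is transitive because an edge through `x` and `z` avoiding `y` could be moved from `x`
to `y`, producing an edge through `y` and `z`. For the dichotomy,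
let `u, v` lie in no common edge and `B = C ∪ {u} ∈ H`. The `(k+1)`-set `X = C ∪ {u, v}` contains
a second edge `B'`; it cannot contain both `u` and `v`, and by cardinality it equals `X` minus
one point, so `B' = C ∪ {v}`.
-/

namespace Hypergraph

variable {V : Type*}

def SharesEdge (H : Finset (Finset V)) (u v : V) : Prop :=
  ∃ B ∈ H, u ∈ B ∧ v ∈ B

theorem SharesEdge.symm {H : Finset (Finset V)} {u v : V} (h : SharesEdge H u v) :
    SharesEdge H v u :=
  let ⟨B, hB, hu, hv⟩ := h
  ⟨B, hB, hv, hu⟩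

variable [DecidableEq V]

def ExchangeInvariant (H : Finset (Finset V)) (u v : V) : Prop :=
  ∀ C : Finset V, u ∉ C → v ∉ C → (insert u C ∈ H ↔ insert v C ∈ H)

def Twins (H : Finset (Finset V)) (u v : V) : Prop :=
  u = v ∨ (¬ SharesEdge H u v ∧ ExchangeInvariant H u v)

variable {H : Finset (Finset V)} {u v x y z : V}

theorem ExchangeInvariant.symm (h : ExchangeInvariant H u v) : ExchangeInvariant H v u :=
  fun C hv hu => (h C hu hv).symm

theorem ExchangeInvariant.trans (hxy : ExchangeInvariant H x y) (hyz : ExchangeInvariant H y z)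
    (hxy' : ¬ SharesEdge H x y) (hyz' : ¬ SharesEdge H y z) : ExchangeInvariant H x z := by
  intro C hxC hzC
  by_cases hyC : y ∈ C
  · exact iff_of_false
      (fun h => hxy' ⟨_, h, C.mem_insert_self x, C.mem_insert_of_mem hyC⟩)
      (fun h => hyz' ⟨_, h, C.mem_insert_of_mem hyC, C.mem_insert_self z⟩)
  · exact (hxy C hxC hyC).trans (hyz C hyC hzC)

theorem not_sharesEdge_of_exchangeInvariant (hxy : ExchangeInvariant H x y)
    (hyz : ¬ SharesEdge H y z) (hxy' : ¬ SharesEdge H x y) (hxz : x ≠ z) :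
    ¬ SharesEdge H x z := by
  rintro ⟨B, hB, hxB, hzB⟩
  have hyB : y ∉ B := fun hyB => hxy' ⟨B, hB, hxB, hyB⟩
  have hmoved : insert y (B.erase x) ∈ H := by
    refine (hxy _ (B.notMem_erase x) fun h => hyB (Finset.mem_of_mem_erase h)).1 ?_
    rwa [Finset.insert_erase hxB]
  exact hyz ⟨_, hmoved, Finset.mem_insert_self _ _,
    Finset.mem_insert_of_mem (Finset.mem_erase.2 ⟨hxz.symm, hzB⟩)⟩

theorem twins_equivalence : Equivalence (Twins H) where
  refl _ := .inl rfl
  symm := by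
    rintro x y (rfl | ⟨hno, hex⟩)
    · exact .inl rfl
    · exact .inr ⟨fun h => hno h.symm, hex.symm⟩
  trans := by
    rintro x y z (rfl | ⟨hxy', hxy⟩) (rfl | ⟨hyz', hyz⟩)
    · exact .inl rfl
    · exact .inr ⟨hyz', hyz⟩
    · exact .inr ⟨hxy', hxy⟩
    · by_cases hxz : x = z
      · exact .inl hxz
      · exact .inr ⟨not_sharesEdge_of_exchangeInvariant hxy hyz' hxy' hxz,
          hxy.trans hyz hxy' hyz'⟩

theorem _root_.Finset.eq_erase_of_subset_of_notMem {B X : Finset V} {w : V} (hBX : B ⊆ X)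
    (hwB : w ∉ B) (hwX : w ∈ X) (hcard : X.card ≤ B.card + 1) : B = X.erase w :=
  Finset.eq_of_subset_of_card_le (Finset.subset_erase.2 ⟨hBX, hwB⟩)
    (by rw [Finset.card_erase_of_mem hwX]; omega)

variable {k : ℕ}

theorem insert_mem_of_not_sharesEdge (hcard : ∀ B ∈ H, B.card = k)
    (htwo : ∀ X : Finset V, X.card = k + 1 → (∃ B ∈ H, B ⊆ X) →
      ∃ B₁ ∈ H, ∃ B₂ ∈ H, B₁ ≠ B₂ ∧ B₁ ⊆ X ∧ B₂ ⊆ X)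
    (huv : u ≠ v) (hno : ¬ SharesEdge H u v) {C : Finset V} (huC : u ∉ C) (hvC : v ∉ C)
    (hu : insert u C ∈ H) : insert v C ∈ H := by
  have hv : v ∉ insert u C := by simp [hvC, huv.symm]
  set X := insert v (insert u C) with hX
  have hXcard : X.card = k + 1 := by rw [Finset.card_insert_of_notMem hv, hcard _ hu]
  have hXu : X.erase u = insert v C := by
    rw [hX, Finset.insert_comm, Finset.erase_insert (by simp [huC, huv])]
  have hXv : X.erase v = insert u C := Finset.erase_insert hv
  have hedges : ∀ B ∈ H, B ⊆ X → B = insert u C ∨ B = insert v C := by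
    intro B hB hBX
    have hle : X.card ≤ B.card + 1 := by rw [hXcard, hcard B hB]
    by_cases huB : u ∈ B
    · have hvB : v ∉ B := fun hvB => hno ⟨B, hB, huB, hvB⟩
      exact .inl (hXv ▸ Finset.eq_erase_of_subset_of_notMem hBX hvB (by simp [hX]) hle)
    · exact .inr (hXu ▸ Finset.eq_erase_of_subset_of_notMem hBX huB (by simp [hX]) hle)
  obtain ⟨B₁, hB₁, B₂, hB₂, hne, hB₁X, hB₂X⟩ :=
    htwo X hXcard ⟨_, hu, Finset.subset_insert v _⟩
  rcases hedges B₁ hB₁ hB₁X with rfl | rfl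
  · rcases hedges B₂ hB₂ hB₂X with rfl | rfl
    · exact absurd rfl hne
    · exact hB₂
  · exact hB₁

theorem twins_iff_not_sharesEdge (hcard : ∀ B ∈ H, B.card = k)
    (htwo : ∀ X : Finset V, X.card = k + 1 → (∃ B ∈ H, B ⊆ X) →
      ∃ B₁ ∈ H, ∃ B₂ ∈ H, B₁ ≠ B₂ ∧ B₁ ⊆ X ∧ B₂ ⊆ X)
    (huv : u ≠ v) : Twins H u v ↔ ¬ SharesEdge H u v := by
  refine ⟨?_, fun hno => .inr ⟨hno, fun C huC hvC => ⟨?_, ?_⟩⟩⟩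
  · rintro (rfl | ⟨hno, -⟩)
    exacts [absurd rfl huv, hno]
  · exact insert_mem_of_not_sharesEdge hcard htwo huv hno huC hvC
  · exact insert_mem_of_not_sharesEdge hcard htwo huv.symm (fun h => hno h.symm) hvC huC

end Hypergraph

open Hypergraph in
theorem hypergraph_equivalence_general {V : Type*} [DecidableEq V]
    (k : ℕ) (H : Finset (Finset V))
    (hcard : ∀ B ∈ H, B.card = k)
    (htwo : ∀ X : Finset V, X.card = k + 1 → (∃ B ∈ H, B ⊆ X) →
      ∃ B₁ ∈ H, ∃ B₂ ∈ H, B₁ ≠ B₂ ∧ B₁ ⊆ X ∧ B₂ ⊆ X) :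
    Equivalence (fun u v : V => u = v ∨
      ((¬ ∃ B ∈ H, u ∈ B ∧ v ∈ B) ∧
        ∀ C : Finset V, u ∉ C → v ∉ C → (insert u C ∈ H ↔ insert v C ∈ H))) ∧
    ∀ u v : V, u ≠ v →
      Xor' (u = v ∨
        ((¬ ∃ B ∈ H, u ∈ B ∧ v ∈ B) ∧
          ∀ C : Finset V, u ∉ C → v ∉ C → (insert u C ∈ H ↔ insert v C ∈ H)))
        (∃ B ∈ H, u ∈ B ∧ v ∈ B) := by
  refine ⟨twins_equivalence, fun u v huv => ?_⟩
  have h : Twins H u v ↔ ¬ SharesEdge H u v := twins_iff_not_sharesEdge hcard htwo huv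
  unfold Twins at h
  unfold SharesEdge ExchangeInvariant at *
  tauto

theorem hypergraph_equivalence {V : Type*} [Fintype V] [DecidableEq V]
    (k : ℕ) (hk : 0 < k) (H : Finset (Finset V))
    (hcard : ∀ B ∈ H, B.card = k)
    (htwo : ∀ X : Finset V, X.card = k + 1 → (∃ B ∈ H, B ⊆ X) →
      ∃ B₁ ∈ H, ∃ B₂ ∈ H, B₁ ≠ B₂ ∧ B₁ ⊆ X ∧ B₂ ⊆ X) :
    Equivalence (fun u v : V => u = v ∨
      ((¬ ∃ B ∈ H, u ∈ B ∧ v ∈ B) ∧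
        ∀ C : Finset V, u ∉ C → v ∉ C → (insert u C ∈ H ↔ insert v C ∈ H))) ∧
    ∀ u v : V, u ≠ v →
      Xor' (u = v ∨
        ((¬ ∃ B ∈ H, u ∈ B ∧ v ∈ B) ∧
          ∀ C : Finset V, u ∉ C → v ∉ C → (insert u C ∈ H ↔ insert v C ∈ H)))
        (∃ B ∈ H, u ∈ B ∧ v ∈ B) :=
  hypergraph_equivalence_general k H hcard htwo
end

section
/- If g is a good counter on a graph G with g(∅,∅) ≥ 2, then g(∅,∅) = 2, g({v}) = 1 for every vertex v, and G is connected. -/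
open Finset
open scoped Classical

variable {V : Type*} [Fintype V]

/-!
Splitting on whether a stable set contains `v` gives `g(∅,∅) = g({v},∅) + g(∅,{v})`; both
terms have absolute value at most `1`, so `g(∅,∅) ≥ 2` forces both to be `1`.
If `G` were disconnected, let `S` be the vertex set of a component: stable sets split as
`A = (A ∩ S) ∪ (A \ S)`, so `fG` factors as `fG(X, Sᶜ) · fG(∅, S)` for `X ⊆ S`. Since
`|g({u})| = 1` for `u ∈ S` and for `u ∉ S`, both factors of `fG(∅,∅)` are units, so
`|g(∅,∅)| = 1`, a contradiction.
-/

theorem SimpleGraph.stable_union_of_no_edges_across {α : Type*} {G : SimpleGraph α}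
    {B C : Finset α} (hB : ∀ u ∈ B, ∀ v ∈ B, ¬ G.Adj u v)
    (hC : ∀ u ∈ C, ∀ v ∈ C, ¬ G.Adj u v) (hBC : ∀ u ∈ B, ∀ v ∈ C, ¬ G.Adj u v) :
    ∀ u ∈ B ∪ C, ∀ v ∈ B ∪ C, ¬ G.Adj u v := by
  simp only [mem_union]
  rintro u (hu | hu) v (hv | hv)
  · exact hB u hu v hv
  · exact hBC u hu v hv
  · exact fun h => hBC v hv u hu h.symm
  · exact hC u hu v hv

namespace fG

variable (G : SimpleGraph V)

theorem eq_add_of_insert (X Y : Finset V) (v : V) :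
    fG G X Y = fG G (insert v X) Y + fG G X (insert v Y) := by
  rw [fG, fG, fG, ← sum_union]
  · congr 1
    ext A
    simp only [mem_filter, mem_union, mem_univ, true_and, insert_subset_iff,
      disjoint_insert_right]
    tauto
  · rw [disjoint_filter]
    simp +contextual [insert_subset_iff]

theorem empty_empty_of_isEmpty [IsEmpty V] : fG G ∅ ∅ = 1 := by
  rw [fG, sum_eq_single_of_mem ∅] <;> simp [eq_empty_of_isEmpty]

theorem eq_mul_of_no_edges_across (S X : Finset V) (hS : ∀ a ∈ S, ∀ b ∉ S, ¬ G.Adj a b)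
    (hX : X ⊆ S) : fG G X ∅ = fG G X Sᶜ * fG G ∅ S := by
  rw [fG, fG, fG, sum_mul_sum, ← sum_product']
  have hmem : ∀ p : Finset V × Finset V, p ∈ (univ.filter fun A : Finset V =>
      (∀ u ∈ A, ∀ v ∈ A, ¬ G.Adj u v) ∧ X ⊆ A ∧ Disjoint A Sᶜ) ×ˢ
      (univ.filter fun A : Finset V =>
      (∀ u ∈ A, ∀ v ∈ A, ¬ G.Adj u v) ∧ ∅ ⊆ A ∧ Disjoint A S) ↔
      ((∀ u ∈ p.1, ∀ v ∈ p.1, ¬ G.Adj u v) ∧ X ⊆ p.1 ∧ p.1 ⊆ S) ∧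
      (∀ u ∈ p.2, ∀ v ∈ p.2, ¬ G.Adj u v) ∧ Disjoint p.2 S := fun p => by
    simp only [mem_product, mem_filter, mem_univ, true_and, disjoint_compl_right_iff,
      empty_subset]
  refine sum_nbij' (fun A => (A ∩ S, A \ S)) (fun p => p.1 ∪ p.2) ?_ ?_ ?_ ?_ ?_
  · intro A hA
    simp only [mem_filter, mem_univ, true_and, disjoint_empty_right, and_true] at hA
    rw [hmem]
    exact ⟨⟨fun u hu v hv => hA.1 u (mem_of_mem_inter_left hu) v (mem_of_mem_inter_left hv),
        subset_inter hA.2 hX, inter_subset_right⟩,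
      fun u hu v hv => hA.1 u (mem_sdiff.1 hu).1 v (mem_sdiff.1 hv).1, sdiff_disjoint⟩
  · rintro ⟨B, C⟩ hp
    rw [hmem] at hp
    obtain ⟨⟨hB, hXB, hBS⟩, hC, hCS⟩ := hp
    simp only [mem_filter, mem_univ, true_and, disjoint_empty_right, and_true]
    exact ⟨G.stable_union_of_no_edges_across hB hC fun u hu v hv =>
      hS u (hBS hu) v (disjoint_left.1 hCS hv), hXB.trans subset_union_left⟩
  · intro A _
    rw [union_comm, sdiff_union_inter]
  · rintro ⟨B, C⟩ hp
    rw [hmem] at hp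
    obtain ⟨⟨-, -, hBS⟩, -, hCS⟩ := hp
    rw [Prod.mk.injEq, union_inter_distrib_right, inter_eq_left.mpr hBS,
      disjoint_iff_inter_eq_empty.mp hCS, union_empty, union_sdiff_distrib,
      sdiff_eq_empty_iff_subset.mpr hBS, sdiff_eq_self_of_disjoint hCS, empty_union]
    exact ⟨rfl, rfl⟩
  · intro A _
    rw [← pow_add, ← card_union_of_disjoint (disjoint_sdiff_inter A S).symm, union_comm,
      sdiff_union_inter]

theorem isUnit_empty_of_not_preconnected (hG : ¬ G.Preconnected)
    (hunit : ∀ v, IsUnit (fG G {v} ∅)) : IsUnit (fG G ∅ ∅) := by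
  obtain ⟨u, v, huv⟩ : ∃ u v, ¬ G.Reachable u v := by
    simpa only [SimpleGraph.Preconnected, not_forall] using hG
  set S := univ.filter (G.Reachable u)
  have hS : ∀ a ∈ S, ∀ b ∉ S, ¬ G.Adj a b := fun a ha b hb hab => by
    simp only [S, mem_filter, mem_univ, true_and] at ha hb
    exact hb (ha.trans hab.reachable)
  have hSc : ∀ a ∈ Sᶜ, ∀ b ∉ Sᶜ, ¬ G.Adj a b := fun a ha b hb hab =>
    hS b (notMem_compl.mp hb) a (mem_compl.mp ha) hab.symm
  have hu := eq_mul_of_no_edges_across G S {u} hS (by simp [S])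
  have hv := eq_mul_of_no_edges_across G Sᶜ {v} hSc (by simp [S, huv])
  rw [compl_compl] at hv
  rw [eq_mul_of_no_edges_across G S ∅ hS (empty_subset _)]
  exact (isUnit_of_mul_isUnit_right (hv ▸ hunit v)).mul
    (isUnit_of_mul_isUnit_right (hu ▸ hunit u))

end fG

namespace IsCounter

variable {G : SimpleGraph V} {g : Finset V → Finset V → ℤ}

theorem abs_eq (hc : IsCounter G g) (X Y : Finset V) : |g X Y| = |fG G X Y| := by
  rcases hc with rfl | rfl
  · rfl
  · exact abs_neg _

theorem eq_add_of_insert (hc : IsCounter G g) (X Y : Finset V) (v : V) :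
    g X Y = g (insert v X) Y + g X (insert v Y) := by
  rcases hc with rfl | rfl <;> simp only [fG.eq_add_of_insert G X Y v, neg_add]

end IsCounter

theorem step1 (G : SimpleGraph V) (g : Finset V → Finset V → ℤ)
    (hc : IsCounter G g) (hg : IsGood g) (h2 : 2 ≤ g ∅ ∅) :
    g ∅ ∅ = 2 ∧ (∀ v : V, g {v} ∅ = 1) ∧ G.Connected := by
  have hvals : ∀ v, g {v} ∅ = 1 ∧ g ∅ ∅ = 2 := fun v => by
    have hsplit : g ∅ ∅ = g {v} ∅ + g ∅ {v} := hc.eq_add_of_insert ∅ ∅ v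
    have h1 := abs_le.mp (hg {v} ∅ (disjoint_empty_right _) (by simp)).1
    have h2 := abs_le.mp (hg ∅ {v} (disjoint_empty_left _) (by simp)).1
    omega
  have hne : Nonempty V := by
    by_contra hV
    have : IsEmpty V := not_nonempty_iff.mp hV
    have habs := hc.abs_eq ∅ ∅
    rw [fG.empty_empty_of_isEmpty, abs_one, abs_of_pos (by omega)] at habs
    omega
  obtain ⟨v₀⟩ := hne
  refine ⟨(hvals v₀).2, fun v => (hvals v).1, G.connected_iff.mpr ⟨?_, ⟨v₀⟩⟩⟩
  by_contra hG
  have hunit := fG.isUnit_empty_of_not_preconnected G hG fun v => by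
    rw [Int.isUnit_iff_abs_eq, ← hc.abs_eq, (hvals v).1, abs_one]
  rw [Int.isUnit_iff_abs_eq, ← hc.abs_eq, (hvals v₀).2] at hunit
  norm_num at hunit
end
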